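/- Let n ≥ 1 and let φ : ℝⁿ → ℝⁿ be twice continuously differentiable. Denote by Dφ(x) its Jacobian matrix and by Cof Dφ(x) := (adjugate(Dφ(x)))ᵀ the cofactor matrix of the Jacobian. Then every row of the cofactor matrix is a divergence-free vector field: for each index i and every x ∈ ℝⁿ, Σⱼ ∂ⱼ (Cof Dφ(x))ᵢⱼ = 0 (the Piola identity). -/

import Mathlib

open Matrix

/-- The Jacobian matrix of a map `φ : ℝⁿ → ℝⁿ` at a point `x`:
`(jacobian φ x) i j = ∂ⱼ φᵢ (x)`. -/
noncomputable def jacobian {n : ℕ} (φ : (Fin n → ℝ) → (Fin n → ℝ)) (x : Fin n → ℝ) :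
    Matrix (Fin n) (Fin n) ℝ :=
  Matrix.of fun i j => fderiv ℝ φ x (Pi.single j 1) i

/-- The cofactor matrix of a square matrix: `Cof A = (adjugate A)ᵀ`. -/
noncomputable def cofactor {n : ℕ} (A : Matrix (Fin n) (Fin n) ℝ) :
    Matrix (Fin n) (Fin n) ℝ :=
  (Matrix.adjugate A)ᵀ

/-- The entry of the update-row matrix appearing in the permutation expansion of the
cofactor. -/
noncomputable def pF {n : ℕ} (φ : (Fin n → ℝ) → (Fin n → ℝ)) (i : Fin n)
    (σ : Equiv.Perm (Fin n)) (j k : Fin n) (y : Fin n → ℝ) : ℝ :=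
  if σ k = i then (Pi.single j 1 : Fin n → ℝ) k else fderiv ℝ φ y (Pi.single k 1) (σ k)

/-- The derivative (at the base point) of `fun y => pF φ i σ j k y`, expressed in terms of
the second derivative `f''` of `φ`. -/
noncomputable def pF' {n : ℕ}
    (f'' : (Fin n → ℝ) →L[ℝ] (Fin n → ℝ) →L[ℝ] (Fin n → ℝ)) (i : Fin n)
    (σ : Equiv.Perm (Fin n)) (k : Fin n) : (Fin n → ℝ) →L[ℝ] ℝ :=
  if σ k = i then 0 else
    (ContinuousLinearMap.proj (σ k)).comp (f''.flip (Pi.single k 1))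

lemma pF'_single {n : ℕ} (f'' : (Fin n → ℝ) →L[ℝ] (Fin n → ℝ) →L[ℝ] (Fin n → ℝ))
    (i : Fin n) (σ : Equiv.Perm (Fin n)) (k j : Fin n) :
    pF' f'' i σ k (Pi.single j 1) =
      if σ k = i then 0 else f'' (Pi.single j 1) (Pi.single k 1) (σ k) := by
  unfold pF'
  split_ifs with h <;> simp

/-- **The Piola identity.** If `φ : ℝⁿ → ℝⁿ` is twice continuously differentiable, then
every row of the cofactor matrix of its Jacobian is a divergence-free vector field:
`∑ⱼ ∂ⱼ (Cof Dφ(x))ᵢⱼ = 0` for each row index `i` and all `x`. -/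
theorem piola_identity {n : ℕ} (hn : 1 ≤ n)
    (φ : (Fin n → ℝ) → (Fin n → ℝ)) (hφ : ContDiff ℝ 2 φ)
    (i : Fin n) (x : Fin n → ℝ) :
    ∑ j, fderiv ℝ (fun y => cofactor (jacobian φ y) i j) x (Pi.single j 1) = 0 := by
  classical
  have hdiff : Differentiable ℝ φ := hφ.differentiable (by norm_num)
  have hf'C1 : ContDiff ℝ 1 (fderiv ℝ φ) := hφ.fderiv_right (by norm_num)
  set f'' : (Fin n → ℝ) →L[ℝ] (Fin n → ℝ) →L[ℝ] (Fin n → ℝ) :=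
    fderiv ℝ (fderiv ℝ φ) x with hf''def
  have h1 : HasFDerivAt (fderiv ℝ φ) f'' x := ((hf'C1.differentiable one_ne_zero) x).hasFDerivAt
  have hsymm : ∀ v w : Fin n → ℝ, f'' v w = f'' w v :=
    second_derivative_symmetric (fun y => (hdiff y).hasFDerivAt) h1
  set e : Equiv.Perm (Fin n) → ℝ := fun σ => ((Equiv.Perm.sign σ : ℤ) : ℝ) with he
  -- each factor is differentiable with derivative `pF'`
  have hFd : ∀ (σ : Equiv.Perm (Fin n)) (j k : Fin n),
      HasFDerivAt (fun y => pF φ i σ j k y) (pF' f'' i σ k) x := by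
    intro σ j k
    unfold pF pF'
    by_cases h : σ k = i
    · simp only [h, if_pos rfl]
      exact hasFDerivAt_const _ _
    · simp only [h, if_neg h]
      have h2 := h1.clm_apply (hasFDerivAt_const (Pi.single k 1 : Fin n → ℝ) x)
      have h2' : HasFDerivAt (fun y => fderiv ℝ φ y (Pi.single k 1))
          (f''.flip (Pi.single k 1)) x := by
        simpa using h2
      exact (ContinuousLinearMap.proj (σ k)).hasFDerivAt.comp x h2'
  -- permutation expansion of the cofactor entry
  have hcof : ∀ (j : Fin n) (y : Fin n → ℝ),
      cofactor (jacobian φ y) i j = ∑ σ : Equiv.Perm (Fin n), e σ * ∏ k, pF φ i σ j k y := by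
    intro j y
    have : cofactor (jacobian φ y) i j =
        ((jacobian φ y).updateRow i (Pi.single j 1)).det := by
      rw [cofactor, Matrix.transpose_apply, Matrix.adjugate_apply]
    rw [this, Matrix.det_apply']
    refine Finset.sum_congr rfl fun σ _ => ?_
    congr 1
    refine Finset.prod_congr rfl fun k _ => ?_
    rw [Matrix.updateRow_apply, pF]
    rfl
  -- compute the fderiv of each cofactor entry
  have hDj : ∀ j : Fin n, fderiv ℝ (fun y => cofactor (jacobian φ y) i j) x =
      ∑ σ : Equiv.Perm (Fin n),
        e σ • (∑ k, (∏ m ∈ Finset.univ.erase k, pF φ i σ j m x) • pF' f'' i σ k) := by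
    intro j
    have hfun : (fun y => cofactor (jacobian φ y) i j) =
        fun y => ∑ σ : Equiv.Perm (Fin n), e σ * ∏ k, pF φ i σ j k y :=
      funext fun y => hcof j y
    rw [hfun]
    refine HasFDerivAt.fderiv ?_
    exact HasFDerivAt.fun_sum fun σ _ =>
      (HasFDerivAt.finset_prod (fun k _ => hFd σ j k)).const_mul (e σ)
  simp only [hDj, ContinuousLinearMap.sum_apply, ContinuousLinearMap.smul_apply,
    smul_eq_mul]
  -- term function over triples (j, σ, k)
  set t : Fin n × Equiv.Perm (Fin n) × Fin n → ℝ := fun p =>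
    e p.2.1 * ((∏ m ∈ Finset.univ.erase p.2.2, pF φ i p.2.1 p.1 m x) *
      pF' f'' i p.2.1 p.2.2 (Pi.single p.1 1)) with ht
  have hgoal : (∑ j, ∑ σ : Equiv.Perm (Fin n),
      e σ * ∑ k, (∏ m ∈ Finset.univ.erase k, pF φ i σ j m x) *
        pF' f'' i σ k (Pi.single j 1)) =
      ∑ p : Fin n × Equiv.Perm (Fin n) × Fin n, t p := by
    rw [Fintype.sum_prod_type]
    refine Finset.sum_congr rfl fun j _ => ?_
    rw [Fintype.sum_prod_type]
    refine Finset.sum_congr rfl fun σ _ => ?_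
    rw [Finset.mul_sum]
  rw [hgoal]
  -- key vanishing lemma: if σ j ≠ i the term vanishes
  have zero1 : ∀ (j : Fin n) (σ : Equiv.Perm (Fin n)) (k : Fin n),
      σ j ≠ i → t (j, σ, k) = 0 := by
    intro j σ k hj
    by_cases hk : σ k = i
    · simp [ht, pF'_single, hk]
    · have hmem : σ⁻¹ i ∈ Finset.univ.erase k := by
        refine Finset.mem_erase.2 ⟨?_, Finset.mem_univ _⟩
        intro hcontra
        exact hk (by rw [← hcontra]; simp)
      have hzero : pF φ i σ j (σ⁻¹ i) x = 0 := by
        rw [pF, if_pos (by simp)]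
        refine Pi.single_eq_of_ne ?_ 1
        intro hcontra
        exact hj (by rw [← hcontra]; simp)
      have : (∏ m ∈ Finset.univ.erase k, pF φ i σ j m x) = 0 :=
        Finset.prod_eq_zero hmem hzero
      simp [ht, this]
  -- diagonal terms vanish
  have diag : ∀ (j : Fin n) (σ : Equiv.Perm (Fin n)), t (j, σ, j) = 0 := by
    intro j σ
    by_cases hj : σ j = i
    · simp [ht, pF'_single, hj]
    · exact zero1 j σ j hj
  -- cancellation for off-diagonal terms with σ j = i
  have pair : ∀ (j : Fin n) (σ : Equiv.Perm (Fin n)) (k : Fin n),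
      j ≠ k → σ j = i → t (j, σ, k) + t (k, σ * Equiv.swap j k, j) = 0 := by
    intro j σ k hjk hj
    set σ' : Equiv.Perm (Fin n) := σ * Equiv.swap j k with hσ'
    have hσ'k : σ' k = i := by simp [hσ', Equiv.Perm.mul_apply, Equiv.swap_apply_right, hj]
    have hσk : σ k ≠ i := fun h => hjk (σ.injective (hj.trans h.symm))
    have hσ'j : σ' j = σ k := by simp [hσ', Equiv.Perm.mul_apply, Equiv.swap_apply_left]
    -- signs
    have hsign : e σ' = -e σ := by
      rw [he, hσ']
      simp only [Equiv.Perm.sign_mul, Equiv.Perm.sign_swap hjk]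
      push_cast
      ring
    -- products
    have hjmem : j ∈ Finset.univ.erase k := Finset.mem_erase.2 ⟨hjk, Finset.mem_univ _⟩
    have hkmem : k ∈ Finset.univ.erase j := Finset.mem_erase.2 ⟨(Ne.symm hjk), Finset.mem_univ _⟩
    have hp1 : (∏ m ∈ Finset.univ.erase k, pF φ i σ j m x) =
        ∏ m ∈ (Finset.univ.erase k).erase j, pF φ i σ j m x := by
      rw [← Finset.mul_prod_erase _ _ hjmem]
      have : pF φ i σ j j x = 1 := by rw [pF, if_pos hj]; simp
      rw [this, one_mul]
    have hp2 : (∏ m ∈ Finset.univ.erase j, pF φ i σ' k m x) =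
        ∏ m ∈ (Finset.univ.erase j).erase k, pF φ i σ' k m x := by
      rw [← Finset.mul_prod_erase _ _ hkmem]
      have : pF φ i σ' k k x = 1 := by rw [pF, if_pos hσ'k]; simp
      rw [this, one_mul]
    have hsets : (Finset.univ.erase k).erase j = (Finset.univ.erase j).erase k :=
      Finset.erase_right_comm
    have hprods : (∏ m ∈ Finset.univ.erase k, pF φ i σ j m x) =
        ∏ m ∈ Finset.univ.erase j, pF φ i σ' k m x := by
      rw [hp1, hp2, hsets]
      refine Finset.prod_congr rfl fun m hm => ?_
      obtain ⟨hmk, hmj, -⟩ : m ≠ k ∧ m ≠ j ∧ True := by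
        have h1 := Finset.mem_erase.1 hm
        have h2 := Finset.mem_erase.1 h1.2
        exact ⟨h1.1, h2.1, trivial⟩
      have hσm : σ' m = σ m := by
        simp [hσ', Equiv.Perm.mul_apply, Equiv.swap_apply_of_ne_of_ne hmj hmk]
      have hσmne : σ m ≠ i := fun h => hmj (σ.injective (h.trans hj.symm))
      rw [pF, pF, hσm, if_neg hσmne, if_neg hσmne]
    -- second derivatives
    have hd1 : pF' f'' i σ k (Pi.single j 1) = f'' (Pi.single j 1) (Pi.single k 1) (σ k) := by
      rw [pF'_single, if_neg hσk]
    have hd2 : pF' f'' i σ' j (Pi.single k 1) = f'' (Pi.single j 1) (Pi.single k 1) (σ k) := by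
      rw [pF'_single, hσ'j, if_neg hσk, hsymm]
    simp only [ht, hd1, hd2, hsign, ← hprods]
    ring
  -- apply the involution
  refine Finset.sum_ninvolution
    (fun p => if p.1 = p.2.2 then p else (p.2.2, p.2.1 * Equiv.swap p.1 p.2.2, p.1))
    ?_ ?_ (fun _ => Finset.mem_univ _) ?_
  · rintro ⟨j, σ, k⟩
    by_cases h : j = k
    · subst h
      beta_reduce
      rw [if_pos rfl, diag j σ, add_zero]
    · simp only [if_neg h]
      by_cases hj : σ j = i
      · exact pair j σ k h hj
      · rw [zero1 j σ k hj, zero1 k (σ * Equiv.swap j k) j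
          (by simpa [Equiv.Perm.mul_apply, Equiv.swap_apply_right] using hj)]
        ring
  · rintro ⟨j, σ, k⟩ hne
    by_cases h : j = k
    · exfalso
      subst h
      exact hne (diag j σ)
    · simp only [if_neg h]
      intro hcontra
      exact h (congrArg Prod.fst hcontra).symm
  · rintro ⟨j, σ, k⟩
    by_cases h : j = k
    · simp [h]
    · simp only [if_neg h]
      have h' : (k : Fin n) ≠ j := Ne.symm h
      simp only [if_neg h']
      refine Prod.ext rfl (Prod.ext ?_ rfl)
      show (σ * Equiv.swap j k) * Equiv.swap k j = σ
      rw [Equiv.swap_comm, mul_assoc, Equiv.swap_mul_self, mul_one]
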